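/- arXiv:1403.5170 — 2 statements merged into one kernel-verified Lean document; each statement's English description precedes it below -/
import Mathlib

section
/- Let L_i ⊆ A_i* be languages for i = 1,…,n, let A = ∪_{i=1}^n A_i, and let A_k ⊆ A satisfy ∪_{1≤i,j≤n, i≠j}(A_i ∩ A_j) ⊆ A_k. Let P_k : A* → A_k* be the natural projection and, for each i, let Q_i : A_i* → (A_i ∩ A_k)* be the natural projection. Then P_k(‖_{i=1}^n L_i) = ‖_{i=1}^n Q_i(L_i). -/
variable {α : Type*}

/-- The natural projection onto subalphabet `B`: erases events not in `B`. -/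
noncomputable def proj (B : Set α) (w : List α) : List α :=
  w.filter fun a => @decide (a ∈ B) (Classical.propDecidable _)

/-- Words over alphabet `A`. -/
def Words (A : Set α) : Set (List α) := {w | ∀ a ∈ w, a ∈ A}

/-- Synchronous product of a family of languages `M i` over alphabets `B i`:
`‖_i M i = ⋂_i P_{B i}⁻¹ (M i)`, a language over `⋃ i, B i`. -/
def SyncProd {ι : Type*} (B : ι → Set α) (M : ι → Set (List α)) : Set (List α) :=
  {w | w ∈ Words (⋃ i, B i) ∧ ∀ i, proj (B i) w ∈ M i}

/-- Binary synchronous product of `M₁` over `B₁` and `M₂` over `B₂`. -/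
def sync2 (B₁ B₂ : Set α) (M₁ M₂ : Set (List α)) : Set (List α) :=
  {w | w ∈ Words (B₁ ∪ B₂) ∧ proj B₁ w ∈ M₁ ∧ proj B₂ w ∈ M₂}

/-- `K` is controllable with respect to `L` and uncontrollable events `Au`:
`K·Au ∩ L ⊆ K`. -/
def Controllable (K L : Set (List α)) (Au : Set α) : Prop :=
  ∀ s ∈ K, ∀ a ∈ Au, s ++ [a] ∈ L → s ++ [a] ∈ K

def PrefixClosed (L : Set (List α)) : Prop :=
  ∀ w ∈ L, ∀ v : List α, v <+: w → v ∈ L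

/-- The projection onto `B` is an `L`-observer. -/
def IsObserver (B : Set α) (L : Set (List α)) : Prop :=
  ∀ t ∈ proj B '' L, ∀ s ∈ L, proj B s <+: t →
    ∃ u : List α, s ++ u ∈ L ∧ proj B (s ++ u) = t

/-- The projection onto `Ao` is output control consistent (OCC) for `L`
(with uncontrollable events `Au`). -/
def OCC (Ao Au : Set α) (L : Set (List α)) : Prop :=
  ∀ s ∈ L, ∀ (mid : List α) (σk : α), σk ∈ Ao → (∀ a ∈ mid, a ∉ Ao) →
    (s = mid ++ [σk] ∨
      ∃ (s' : List α) (σ' : α), σ' ∈ Ao ∧ s = s' ++ σ' :: (mid ++ [σk])) →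
    σk ∈ Au → ∀ a ∈ mid, a ∈ Au

/-- Supremal controllable sublanguage of `K` w.r.t. `L` and `Au`:
the union of all sublanguages of `K` controllable w.r.t. `L` and `Au`. -/
def supC (K L : Set (List α)) (Au : Set α) : Set (List α) :=
  ⋃₀ {M | M ⊆ K ∧ Controllable M L Au}

/-- C&P coobservability of `K'` w.r.t. plant `L`, observation alphabets `Bo i`
and local controllable alphabets `Bc i`. -/
def Coobservable {ι : Type*} (Bo Bc : ι → Set α) (L K' : Set (List α)) : Prop :=
  ∀ s ∈ K', ∀ a ∈ ⋃ i, Bc i, s ++ [a] ∈ L → s ++ [a] ∉ K' →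
    ∃ i, a ∈ Bc i ∧
      ∀ s' ∈ Words (⋃ j, Bo j), proj (Bo i) s' = proj (Bo i) s → s' ++ [a] ∉ K'

/-- The closed-loop language of supervisor `S` over plant `M`:
the smallest language containing `ε` and closed under enabled extensions in `M`. -/
inductive InClosedLoop (S : List α → Set α) (M : Set (List α)) : List α → Prop
  | nil : InClosedLoop S M []
  | step {s : List α} {a : α} : InClosedLoop S M s → s ++ [a] ∈ M → a ∈ S s →
      InClosedLoop S M (s ++ [a])

def ClosedLoop (S : List α → Set α) (M : Set (List α)) : Set (List α) :=
  {w | InClosedLoop S M w}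

/-- A supervisor over alphabet `B` whose control patterns contain the
uncontrollable events `Bu` (i.e. `Bu ⊆ S s ⊆ B`). -/
def IsSupervisor (B Bu : Set α) (S : List α → Set α) : Prop :=
  ∀ s : List α, Bu ⊆ S s ∧ S s ⊆ B

/-- The coordinator language `L_k = ‖_{i=1}^n P_k (L i)` (each `P_k(L i)` being a
language over `A i ∩ Ak`). -/
def coordLang {n : ℕ} (A : Fin n → Set α) (Ak : Set α) (L : Fin n → Set (List α)) :
    Set (List α) :=
  SyncProd (fun i => A i ∩ Ak) (fun i => proj Ak '' L i)

/-- Two-level conditional controllability of `K` w.r.t. plants `L i` over `A i`,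
grouping `g`, group-coordinator alphabets `Akj j` (coordinators
`L_{k_j} = ‖_i P_{k_j}(L i)`), and uncontrollable events `Au`. -/
def TwoLevelCC {n m : ℕ} (A : Fin n → Set α) (g : Fin n → Fin m) (Akj : Fin m → Set α)
    (L : Fin n → Set (List α)) (Au : Set α) (K : Set (List α)) : Prop :=
  (∀ j : Fin m, Controllable (proj (Akj j) '' K) (coordLang A (Akj j) L) (Akj j ∩ Au)) ∧
  (∀ i : Fin n, Controllable (proj (A i ∪ Akj (g i)) '' K)
      (sync2 (A i) (Akj (g i)) (L i) (proj (Akj (g i)) '' K))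
      ((A i ∪ Akj (g i)) ∩ Au))

/-- `supC_{k_j}`. -/
def supCk {n : ℕ} (A : Fin n → Set α) (Akj : Set α) (L : Fin n → Set (List α))
    (Au : Set α) (K : Set (List α)) : Set (List α) :=
  supC (proj Akj '' K) (coordLang A Akj L) (Akj ∩ Au)

/-- `supC_{i+k_j}` (with `j = g i`). -/
def supCik {n m : ℕ} (A : Fin n → Set α) (g : Fin n → Fin m) (Akj : Fin m → Set α)
    (L : Fin n → Set (List α)) (Au : Set α) (K : Set (List α)) (i : Fin n) :
    Set (List α) :=
  supC (proj (A i ∪ Akj (g i)) '' K)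
    (sync2 (A i) (Akj (g i)) (L i) (supCk A (Akj (g i)) L Au K))
    ((A i ∪ Akj (g i)) ∩ Au)

/-- Two-level conditional decomposability of `K` w.r.t. `(A i)`, the high-level
coordinator alphabet `Ak` and the low-level coordinator alphabets `Akj j`. -/
def TwoLevelCD {n m : ℕ} (A : Fin n → Set α) (g : Fin n → Fin m) (Ak : Set α)
    (Akj : Fin m → Set α) (K : Set (List α)) : Prop :=
  K = SyncProd (fun r : Fin m => (⋃ i ∈ {i | g i = r}, A i) ∪ Ak)
        (fun r => proj ((⋃ i ∈ {i | g i = r}, A i) ∪ Ak) '' K) ∧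
  ∀ r : Fin m, proj ((⋃ i ∈ {i | g i = r}, A i) ∪ Ak) '' K =
    SyncProd (fun i : {i : Fin n // g i = r} => A i.1 ∪ Akj r)
      (fun i => proj (A i.1 ∪ Akj r) '' K)

/-- The supremal two-level conditionally controllable sublanguage of `K`. -/
def supTwoCC {n m : ℕ} (A : Fin n → Set α) (g : Fin n → Fin m) (Akj : Fin m → Set α)
    (L : Fin n → Set (List α)) (Au : Set α) (K : Set (List α)) : Set (List α) :=
  ⋃₀ {K' | K' ⊆ K ∧ PrefixClosed K' ∧ TwoLevelCC A g Akj L Au K'}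

attribute [local instance] Classical.propDecidable

/-
Given `t` and words `s i ∈ L i` with matching projections onto `A i ∩ Ak`, a preimage `w` of `t`
in the synchronous product is built letter by letter. If some `s i` starts with a letter outside
`Ak`, that letter is private to `A i` (every shared event lies in `Ak`), so it can be emitted
alone. Otherwise the next letter `c` of `t` is the first letter of every `s i` with `c ∈ A i`,
and it is emitted in all of them at once.
-/

attribute [local instance] Classical.propDecidable

section Proj

variable {B C : Set α} {a : α} {u v w : List α}

@[simp]
lemma proj_nil : proj B ([] : List α) = [] := rfl

lemma proj_cons_of_mem (h : a ∈ B) : proj B (a :: w) = a :: proj B w := by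
  simp [proj, h]

lemma proj_cons_of_notMem (h : a ∉ B) : proj B (a :: w) = proj B w := by
  simp [proj, h]

lemma proj_append : proj B (u ++ v) = proj B u ++ proj B v := List.filter_append _ _

lemma mem_proj : a ∈ proj B w ↔ a ∈ w ∧ a ∈ B := by
  simp [proj]

lemma proj_proj_of_subset (h : B ⊆ C) : proj B (proj C w) = proj B w := by
  simp only [proj, List.filter_filter]
  congr 1
  funext x
  by_cases hx : x ∈ B
  · simp [hx, h hx]
  · simp [hx]

lemma mem_words_of_append_mem_words (h : u ++ v ∈ Words B) : v ∈ Words B :=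
  fun x hx => h x (List.mem_append_right u hx)

end Proj

section Lift

variable {ι : Type*} {A : ι → Set α} {Ak : Set α}

/-- `t` and the family `s` are the projections onto `Ak` and onto the `A i` of one word, as far as
can be checked on the `A i ∩ Ak`. -/
def Consistent (A : ι → Set α) (Ak : Set α) (t : List α) (s : ι → List α) : Prop :=
  t ∈ Words (⋃ i, A i ∩ Ak) ∧
    ∀ i, s i ∈ Words (A i) ∧ proj (A i ∩ Ak) (s i) = proj (A i ∩ Ak) t

def IsLift (A : ι → Set α) (Ak : Set α) (t : List α) (s : ι → List α) (w : List α) :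
    Prop :=
  w ∈ Words (⋃ i, A i) ∧ proj Ak w = t ∧ ∀ i, proj (A i) w = s i

lemma IsLift.cons {t : List α} {s s' : ι → List α} {w : List α} {a : α}
    (h : IsLift A Ak t s' w) (ha : a ∈ ⋃ i, A i) (hs : ∀ i, s i = proj (A i) [a] ++ s' i) :
    IsLift A Ak (proj Ak [a] ++ t) s (a :: w) := by
  obtain ⟨hw, ht, hs'⟩ := h
  refine ⟨?_, ?_, fun i => ?_⟩
  · intro x hx
    rcases List.mem_cons.1 hx with rfl | hx
    exacts [ha, hw x hx]
  · rw [← List.singleton_append, proj_append, ht]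
  · rw [← List.singleton_append, proj_append, hs', hs]

lemma Consistent.of_cons {t : List α} {s s' : ι → List α} {a : α}
    (h : Consistent A Ak (proj Ak [a] ++ t) s) (hs : ∀ i, s i = proj (A i) [a] ++ s' i) :
    Consistent A Ak t s' := by
  refine ⟨mem_words_of_append_mem_words h.1, fun i => ?_⟩
  obtain ⟨hsA, hproj⟩ := h.2 i
  rw [hs i] at hsA hproj
  rw [proj_append, proj_append, proj_proj_of_subset Set.inter_subset_left,
    proj_proj_of_subset Set.inter_subset_right] at hproj
  exact ⟨mem_words_of_append_mem_words hsA, List.append_cancel_left hproj⟩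

lemma eq_proj_singleton_append_update [DecidableEq ι]
    (hsh : ∀ i j, i ≠ j → A i ∩ A j ⊆ Ak) {s : ι → List α} {i : ι} {a : α}
    {r : List α} (hsi : s i = a :: r) (haA : a ∈ A i) (haK : a ∉ Ak) (j : ι) :
    s j = proj (A j) [a] ++ Function.update s i r j := by
  rcases eq_or_ne j i with rfl | hji
  · simp [hsi, proj_cons_of_mem haA]
  · have haj : a ∉ A j := fun haj => haK (hsh i j hji.symm ⟨haA, haj⟩)
    simp [hji, proj_cons_of_notMem haj]

lemma Consistent.exists_step (hsh : ∀ i j, i ≠ j → A i ∩ A j ⊆ Ak) {t : List α}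
    {s : ι → List α} (h : Consistent A Ak t s) (hne : ¬(t = [] ∧ ∀ i, s i = [])) :
    ∃ (a : α) (t' : List α) (s' : ι → List α),
      t = proj Ak [a] ++ t' ∧ a ∈ ⋃ i, A i ∧ ∀ i, s i = proj (A i) [a] ++ s' i := by
  by_cases hpriv : ∃ i a r, s i = a :: r ∧ a ∉ Ak
  · obtain ⟨i, a, r, hsi, haK⟩ := hpriv
    have haA : a ∈ A i := (h.2 i).1 a (by simp [hsi])
    exact ⟨a, t, Function.update s i r, by simp [proj_cons_of_notMem haK],
      Set.mem_iUnion.2 ⟨i, haA⟩, eq_proj_singleton_append_update hsh hsi haA haK⟩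
  push Not at hpriv
  have hhead : ∀ i a r, s i = a :: r → proj (A i ∩ Ak) t = a :: proj (A i ∩ Ak) r := by
    intro i a r hsi
    have haA : a ∈ A i := (h.2 i).1 a (by simp [hsi])
    rw [← (h.2 i).2, hsi, proj_cons_of_mem (Set.mem_inter haA (hpriv i a r hsi))]
  obtain ⟨c, t', rfl⟩ : ∃ c t', t = c :: t' := by
    refine List.exists_cons_of_ne_nil fun ht => hne ⟨ht, fun i => ?_⟩
    rcases hsi : s i with _ | ⟨a, r⟩
    · rfl
    · simpa [ht] using hhead i a r hsi
  obtain ⟨j, hcA, hcK⟩ := Set.mem_iUnion.1 (h.1 c (by simp))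
  refine ⟨c, t', fun i => if c ∈ A i then (s i).tail else s i,
    by simp [proj_cons_of_mem hcK], Set.mem_iUnion.2 ⟨j, hcA⟩, fun i => ?_⟩
  by_cases hci : c ∈ A i
  · rcases hsi : s i with _ | ⟨a, r⟩
    · have := (h.2 i).2
      simp [hsi, proj_cons_of_mem (Set.mem_inter hci hcK)] at this
    · have := hhead i a r hsi
      rw [proj_cons_of_mem (Set.mem_inter hci hcK), List.cons.injEq] at this
      obtain ⟨rfl, -⟩ := this
      simp [hsi, hci, proj_cons_of_mem hci]
  · simp [hci, proj_cons_of_notMem hci]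

lemma length_add_sum_length_lt [Fintype ι] {t : List α} {s s' : ι → List α} {a : α}
    (ha : a ∈ ⋃ i, A i) (hs : ∀ i, s i = proj (A i) [a] ++ s' i) :
    t.length + ∑ i, (s' i).length < (proj Ak [a] ++ t).length + ∑ i, (s i).length := by
  obtain ⟨j, hj⟩ := Set.mem_iUnion.1 ha
  have hone : 1 ≤ ∑ i, (proj (A i) [a]).length := by
    refine le_trans ?_ (Finset.single_le_sum (fun i _ => Nat.zero_le _) (Finset.mem_univ j))
    simp [proj_cons_of_mem hj]
  simp only [hs, List.length_append, Finset.sum_add_distrib]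
  omega

theorem Consistent.exists_isLift [Fintype ι] (hsh : ∀ i j, i ≠ j → A i ∩ A j ⊆ Ak)
    {t : List α} {s : ι → List α} (h : Consistent A Ak t s) : ∃ w, IsLift A Ak t s w := by
  induction hm : t.length + ∑ i, (s i).length using Nat.strong_induction_on
    generalizing t s with
  | _ m ih =>
    by_cases hempty : t = [] ∧ ∀ i, s i = []
    · obtain ⟨rfl, hs⟩ := hempty
      exact ⟨[], fun _ => by simp, rfl, fun i => (hs i).symm⟩
    obtain ⟨a, t', s', rfl, ha, hs⟩ := h.exists_step hsh hempty
    obtain ⟨w, hw⟩ := ih _ (hm ▸ length_add_sum_length_lt ha hs) (h.of_cons hs) rfl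
    exact ⟨a :: w, hw.cons ha hs⟩

end Lift

lemma proj_image_syncProd_subset {ι : Type*} (A : ι → Set α) (Ak : Set α)
    (L : ι → Set (List α)) :
    proj Ak '' SyncProd A L ⊆
      SyncProd (fun i => A i ∩ Ak) (fun i => proj (A i ∩ Ak) '' L i) := by
  rintro _ ⟨w, ⟨hw, hwL⟩, rfl⟩
  refine ⟨fun a ha => ?_, fun i => ⟨proj (A i) w, hwL i, ?_⟩⟩
  · obtain ⟨haw, haK⟩ := mem_proj.1 ha
    obtain ⟨i, hi⟩ := Set.mem_iUnion.1 (hw a haw)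
    exact Set.mem_iUnion.2 ⟨i, hi, haK⟩
  · rw [proj_proj_of_subset Set.inter_subset_left, proj_proj_of_subset Set.inter_subset_right]

lemma syncProd_proj_subset_proj_image_syncProd {ι : Type*} [Fintype ι] (A : ι → Set α)
    (Ak : Set α) (hsh : ∀ i j, i ≠ j → A i ∩ A j ⊆ Ak) (L : ι → Set (List α))
    (hLW : ∀ i, L i ⊆ Words (A i)) :
    SyncProd (fun i => A i ∩ Ak) (fun i => proj (A i ∩ Ak) '' L i) ⊆
      proj Ak '' SyncProd A L := by
  rintro t ⟨ht, htL⟩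
  choose s hsL hs using htL
  obtain ⟨w, hw, hwt, hws⟩ :=
    Consistent.exists_isLift hsh ⟨ht, fun i => ⟨hLW i (hsL i), hs i⟩⟩
  exact ⟨w, ⟨hw, fun i => hws i ▸ hsL i⟩, hwt⟩

theorem stmt_3_general (n : ℕ) (A : Fin n → Set α) (Ak : Set α)
    (hsh : ∀ i j, i ≠ j → A i ∩ A j ⊆ Ak)
    (L : Fin n → Set (List α)) (hLW : ∀ i, L i ⊆ Words (A i)) :
    proj Ak '' SyncProd A L =
      SyncProd (fun i => A i ∩ Ak) (fun i => proj (A i ∩ Ak) '' L i) :=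
  (proj_image_syncProd_subset A Ak L).antisymm
    (syncProd_proj_subset_proj_image_syncProd A Ak hsh L hLW)

/-- If `Ak` contains all shared events, then
`P_k(‖ L i) = ‖ Q_i(L i)` where `Q_i` projects `(A i)*` onto `(A i ∩ Ak)*`. -/
theorem stmt_3 (n : ℕ) (A : Fin n → Set α) (Ak : Set α)
    (hsh : ∀ i j, i ≠ j → A i ∩ A j ⊆ Ak) (hAk : Ak ⊆ ⋃ i, A i)
    (L : Fin n → Set (List α)) (hLW : ∀ i, L i ⊆ Words (A i)) :
    proj Ak '' SyncProd A L =
      SyncProd (fun i => A i ∩ Ak) (fun i => proj (A i ∩ Ak) '' L i) :=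
  stmt_3_general n A Ak hsh L hLW
end

section
/- Let Σ = ∪_{i=1}^n Σ_{o,i}, let Σ_{c,i} ⊆ Σ (i = 1,…,n) with Σ_c = ∪_{i=1}^n Σ_{c,i}, and assume Σ_{o,i} ∩ Σ_c ⊆ Σ_{c,i} for i = 1,…,n. Let L ⊆ Σ* be a prefix-closed plant language and K ⊆ Σ* a prefix-closed language. If K is separable with respect to (Σ_{o,i})_{i=1}^n, i.e., K = ‖_{i=1}^n P_i(K), then K ∩ L is (C&P) coobservable with respect to L and (Σ_{o,i})_{i=1}^n. -/
/-!
If `s ∈ K` but `s a ∉ K`, separability yields an agent `i` with `P_i(s a) ∉ P_i(K)`. As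
`P_i(s) ∈ P_i(K)`, agent `i` observes `a`, so it also controls `a`; and every `s'` that agent `i`
cannot tell apart from `s` has `P_i(s' a) = P_i(s a) ∉ P_i(K)`, hence `s' a ∉ K`.
-/


variable {α : Type*}

def Separable {ι : Type*} (B : ι → Set α) (K : Set (List α)) : Prop :=
  K = SyncProd B fun i => proj (B i) '' K

lemma proj_append_singleton_of_mem {B : Set α} (s : List α) {a : α} (h : a ∈ B) :
    proj B (s ++ [a]) = proj B s ++ [a] := by
  simp [proj, h]

lemma proj_append_singleton_of_notMem {B : Set α} (s : List α) {a : α} (h : a ∉ B) :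
    proj B (s ++ [a]) = proj B s := by
  simp [proj, h]

lemma Words.append_singleton {A : Set α} {s : List α} (hs : s ∈ Words A) {a : α} (ha : a ∈ A) :
    s ++ [a] ∈ Words A := by
  simpa [Words, or_imp, forall_and] using And.intro hs ha

lemma Separable.subset_words {ι : Type*} {B : ι → Set α} {K : Set (List α)}
    (hK : Separable B K) : K ⊆ Words (⋃ i, B i) := by
  rw [hK]
  exact fun _ hw => hw.1

lemma Separable.exists_proj_notMem {ι : Type*} {B : ι → Set α} {K : Set (List α)}
    (hK : Separable B K) {w : List α} (hw : w ∈ Words (⋃ i, B i)) (hwK : w ∉ K) :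
    ∃ i, proj (B i) w ∉ proj (B i) '' K := by
  by_contra! h
  exact hwK (hK ▸ ⟨hw, h⟩)

theorem Separable.exists_observer_of_append_notMem {ι : Type*} {B : ι → Set α}
    {K : Set (List α)} (hK : Separable B K) {s : List α} (hs : s ∈ K) {a : α}
    (ha : a ∈ ⋃ i, B i) (hsa : s ++ [a] ∉ K) :
    ∃ i, a ∈ B i ∧ ∀ s', proj (B i) s' = proj (B i) s → s' ++ [a] ∉ K := by
  obtain ⟨i, hi⟩ := hK.exists_proj_notMem (Words.append_singleton (hK.subset_words hs) ha) hsa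
  have hai : a ∈ B i := by
    by_contra hai
    rw [proj_append_singleton_of_notMem s hai] at hi
    exact hi ⟨s, hs, rfl⟩
  refine ⟨i, hai, fun s' hs' hs'a => hi ⟨s' ++ [a], hs'a, ?_⟩⟩
  rw [proj_append_singleton_of_mem s' hai, proj_append_singleton_of_mem s hai, hs']

theorem stmt_15_general (n : ℕ) (So Sc : Fin n → Set α)
    (hScS : ∀ i, Sc i ⊆ ⋃ j, So j)
    (hcc : ∀ i, So i ∩ (⋃ j, Sc j) ⊆ Sc i)
    (L K : Set (List α))
    (hsep : K = SyncProd So (fun i => proj (So i) '' K)) :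
    Coobservable So Sc L (K ∩ L) := by
  intro s hs a ha hsaL hsa
  obtain ⟨j, haj⟩ := Set.mem_iUnion.1 ha
  obtain ⟨i, hai, hobs⟩ := Separable.exists_observer_of_append_notMem hsep hs.1
    (hScS j haj) fun h => hsa ⟨h, hsaL⟩
  exact ⟨i, hcc i ⟨hai, ha⟩, fun s' _ hs' hs'a => hobs s' hs' hs'a.1⟩

/-- If `Σ_{o,i} ∩ Σ_c ⊆ Σ_{c,i}` for all `i` and `K` is separable
w.r.t. `(Σ_{o,i})`, then `K ∩ L` is C&P coobservable w.r.t. `L` and `(Σ_{o,i})`. -/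
theorem stmt_15 (n : ℕ) (So Sc : Fin n → Set α)
    (hScS : ∀ i, Sc i ⊆ ⋃ j, So j)
    (hcc : ∀ i, So i ∩ (⋃ j, Sc j) ⊆ Sc i)
    (L K : Set (List α))
    (hLW : L ⊆ Words (⋃ i, So i)) (hLpc : PrefixClosed L)
    (hKW : K ⊆ Words (⋃ i, So i)) (hKpc : PrefixClosed K)
    (hsep : K = SyncProd So (fun i => proj (So i) '' K)) :
    Coobservable So Sc L (K ∩ L) :=
  stmt_15_general n So Sc hScS hcc L K hsep
end
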